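/- Let G be a graph and x a vertex such that N_G(x) contains five vertices x_1, ..., x_5 with x_2x_3, x_3x_4, x_1x_5 ∉ E(G) and x_2x_5, x_5x_3, x_3x_1, x_1x_4 ∈ E(G). Then G contains an induced K_{1,3}, an induced W_4, or an induced W_5, with center x. -/
import Mathlib


/-- `G` contains an induced claw `K_{1,3}` with center `x`. -/
def HasInducedClawAt {V : Type*} (G : SimpleGraph V) (x : V) : Prop :=
  ∃ a b c : V, a ≠ b ∧ a ≠ c ∧ b ≠ c ∧
    G.Adj x a ∧ G.Adj x b ∧ G.Adj x c ∧
    ¬ G.Adj a b ∧ ¬ G.Adj a c ∧ ¬ G.Adj b c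

/-- `G` contains an induced 4-wheel `W₄` with center `x`. -/
def HasInducedW4At {V : Type*} (G : SimpleGraph V) (x : V) : Prop :=
  ∃ a b c d : V, a ≠ c ∧ b ≠ d ∧
    G.Adj x a ∧ G.Adj x b ∧ G.Adj x c ∧ G.Adj x d ∧
    G.Adj a b ∧ G.Adj b c ∧ G.Adj c d ∧ G.Adj d a ∧
    ¬ G.Adj a c ∧ ¬ G.Adj b d

/-- `G` contains an induced 5-wheel `W₅` with center `x`. -/
def HasInducedW5At {V : Type*} (G : SimpleGraph V) (x : V) : Prop :=
  ∃ w : Fin 5 → V, Function.Injective w ∧ (∀ i, G.Adj x (w i)) ∧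
    (∀ i, G.Adj (w i) (w (i + 1))) ∧ (∀ i, ¬ G.Adj (w i) (w (i + 2)))

/-- Endgame (v): forces an induced claw, `W₄` or `W₅` with center `x`. -/
theorem statement10 {V : Type*} (G : SimpleGraph V) (x x₁ x₂ x₃ x₄ x₅ : V)
    (h1 : G.Adj x x₁) (h2 : G.Adj x x₂) (h3 : G.Adj x x₃) (h4 : G.Adj x x₄) (h5 : G.Adj x x₅)
    (hne : Function.Injective ![x₁, x₂, x₃, x₄, x₅])
    (n23 : ¬ G.Adj x₂ x₃) (n34 : ¬ G.Adj x₃ x₄) (n15 : ¬ G.Adj x₁ x₅)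
    (e25 : G.Adj x₂ x₅) (e53 : G.Adj x₅ x₃) (e31 : G.Adj x₃ x₁) (e14 : G.Adj x₁ x₄) :
    HasInducedClawAt G x ∨ HasInducedW4At G x ∨ HasInducedW5At G x := by
  have ne' : ∀ i j : Fin 5, i ≠ j →
      ![x₁, x₂, x₃, x₄, x₅] i ≠ ![x₁, x₂, x₃, x₄, x₅] j := fun i j hij h => hij (hne h)
  have d12 : x₁ ≠ x₂ := ne' 0 1 (by decide)
  have d13 : x₁ ≠ x₃ := ne' 0 2 (by decide)
  have d14 : x₁ ≠ x₄ := ne' 0 3 (by decide)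
  have d15 : x₁ ≠ x₅ := ne' 0 4 (by decide)
  have d23 : x₂ ≠ x₃ := ne' 1 2 (by decide)
  have d24 : x₂ ≠ x₄ := ne' 1 3 (by decide)
  have d25 : x₂ ≠ x₅ := ne' 1 4 (by decide)
  have d34 : x₃ ≠ x₄ := ne' 2 3 (by decide)
  have d35 : x₃ ≠ x₅ := ne' 2 4 (by decide)
  have d45 : x₄ ≠ x₅ := ne' 3 4 (by decide)
  by_cases e12 : G.Adj x₁ x₂
  · -- W4 on (x₂, x₁, x₃, x₅)
    exact Or.inr (Or.inl ⟨x₂, x₁, x₃, x₅, d23, d15,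
      h2, h1, h3, h5, e12.symm, e31.symm, e53.symm, e25.symm,
      n23, n15⟩)
  by_cases e24 : G.Adj x₂ x₄
  · by_cases e45 : G.Adj x₄ x₅
    · -- W4 on (x₁, x₃, x₅, x₄)
      exact Or.inr (Or.inl ⟨x₁, x₃, x₅, x₄, d15, d34,
        h1, h3, h5, h4, e31.symm, e53.symm, e45.symm, e14.symm,
        n15, n34⟩)
    · -- W5 on cycle x₂, x₅, x₃, x₁, x₄
      refine Or.inr (Or.inr ⟨![x₂, x₅, x₃, x₁, x₄], ?_, ?_, ?_, ?_⟩)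
      · intro i j h
        fin_cases i <;> fin_cases j <;> simp_all
      · intro i; fin_cases i
        exacts [h2, h5, h3, h1, h4]
      · intro i; fin_cases i
        exacts [e25, e53, e31, e14, e24.symm]
      · intro i; fin_cases i
        exacts [n23, fun h => n15 h.symm, n34, e12, e45]
  · -- claw on {x₂, x₃, x₄}
    exact Or.inl ⟨x₂, x₃, x₄, d23, d24, d34, h2, h3, h4,
      n23, e24, fun h => n34 h⟩
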